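/- Suppose a unitary U can be written as U = e^{iφ} R((−1)^{b_m} P_m) ⋯ R((−1)^{b_1} P_1) C₀ with P_i nonidentity n-qubit Paulis, b_i ∈ {0,1}, C₀ in the n-qubit Clifford group, and R(±P) = e^{iπ(I∓P)/8}. Then U = e^{iφ'} R(P'_m) ⋯ R(P'_1) C₀' for some phase φ', nonidentity Paulis P'_i, and Clifford C₀' — i.e., all signs can be taken positive with the same number m of factors. -/

import Mathlib

/-!
`pauliPhaseGate n f = e^{-iπ/4} e^{iπP/4}` (with `P = pauli n f`) is a Clifford `D_P`, and
`R(-P) = e^{iπ/4} R(P) D_P`. So a factor with a negative sign becomes a positive one followed by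
the Clifford `D_P`. Conjugation by a Clifford maps signed nonidentity Paulis to signed nonidentity
Paulis (it preserves traces, and only the identity Pauli has nonzero trace), and
`D R(A) = R(D A D†) D`, so `D_P` moves through the remaining `m - 1` signed factors into the
Clifford on the right. Induction on `m` removes all signs.
-/

open Matrix

/-- The single-qubit Pauli matrices `I, X, Y, Z`. -/
noncomputable def pauli1 : Fin 4 → Matrix (Fin 2) (Fin 2) ℂ
  | 0 => 1
  | 1 => !![0, 1; 1, 0]
  | 2 => !![0, -Complex.I; Complex.I, 0]
  | 3 => !![1, 0; 0, -1]

/-- The `n`-qubit Pauli operator `P_f = ⊗ᵢ pauli1 (f i)`. -/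
noncomputable def pauli (n : ℕ) (f : Fin n → Fin 4) :
    Matrix (Fin n → Fin 2) (Fin n → Fin 2) ℂ :=
  fun x y => ∏ i, pauli1 (f i) (x i) (y i)

/-- The channel representation `Û_{rs} = 2⁻ⁿ Tr(P_r U P_s U†)`. -/
noncomputable def chan (n : ℕ) (U : Matrix (Fin n → Fin 2) (Fin n → Fin 2) ℂ) :
    Matrix (Fin n → Fin 4) (Fin n → Fin 4) ℂ :=
  fun r s => (2 ^ n : ℂ)⁻¹ * (pauli n r * U * pauli n s * Uᴴ).trace

/-- The `n`-qubit Clifford group: unitaries normalizing the Pauli group up to sign. -/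
def IsClifford (n : ℕ) (C : Matrix (Fin n → Fin 2) (Fin n → Fin 2) ℂ) : Prop :=
  C ∈ Matrix.unitaryGroup (Fin n → Fin 2) ℂ ∧
  ∀ f : Fin n → Fin 4, ∃ g : Fin n → Fin 4, ∃ ε : ℂ, (ε = 1 ∨ ε = -1) ∧
    C * pauli n f * Cᴴ = ε • pauli n g

/-- `R(A) = ½(1+e^{iπ/4})I + ½(1−e^{iπ/4})A`; for `A = ±P` a signed Pauli this is
`e^{iπ(I∓P)/8}`. -/
noncomputable def Rop (n : ℕ) (A : Matrix (Fin n → Fin 2) (Fin n → Fin 2) ℂ) :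
    Matrix (Fin n → Fin 2) (Fin n → Fin 2) ℂ :=
  ((1 + Complex.exp (Complex.I * (Real.pi / 4))) / 2) • (1 : Matrix (Fin n → Fin 2) (Fin n → Fin 2) ℂ) +
    ((1 - Complex.exp (Complex.I * (Real.pi / 4))) / 2) • A

namespace Matrix

variable {ι κ R : Type*} [Fintype ι] [CommSemiring R]

def piKron (A : ι → Matrix κ κ R) : Matrix (ι → κ) (ι → κ) R :=
  fun x y => ∏ i, A i (x i) (y i)

theorem piKron_mul [DecidableEq ι] [Fintype κ] (A B : ι → Matrix κ κ R) :
    piKron A * piKron B = piKron fun i => A i * B i := by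
  ext x y
  simp only [piKron, mul_apply, ← Finset.prod_mul_distrib]
  rw [Finset.prod_univ_sum]
  simp [Fintype.piFinset_univ]

theorem piKron_one [DecidableEq κ] : piKron (fun _ : ι => (1 : Matrix κ κ R)) = 1 := by
  ext x y
  simp only [piKron, one_apply]
  split_ifs with h
  · simp [h]
  · obtain ⟨i, hi⟩ := Function.ne_iff.mp h
    exact Finset.prod_eq_zero (Finset.mem_univ i) (if_neg hi)

theorem piKron_smul (c : ι → R) (A : ι → Matrix κ κ R) :
    piKron (fun i => c i • A i) = (∏ i, c i) • piKron A := by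
  ext x y
  simp [piKron, Finset.prod_mul_distrib]

theorem conjTranspose_piKron [StarRing R] (A : ι → Matrix κ κ R) :
    (piKron A)ᴴ = piKron fun i => (A i)ᴴ := by
  ext x y
  simp [piKron, conjTranspose_apply, star_prod]

theorem trace_piKron [DecidableEq ι] [Fintype κ] (A : ι → Matrix κ κ R) :
    (piKron A).trace = ∏ i, (A i).trace := by
  simp only [trace, diag, piKron]
  rw [Finset.prod_univ_sum]
  simp [Fintype.piFinset_univ]

end Matrix

/-- Numbering `I, X, Y, Z` as `0, 1, 2, 3` encodes them by their bit pairs, so that a product of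
two Pauli matrices is a phase times the Pauli matrix with the XOR-ed index. -/
noncomputable def pauli1Phase : Fin 4 → Fin 4 → ℂ
  | 0, _ => 1
  | 1, 0 => 1 | 1, 1 => 1 | 1, 2 => Complex.I | 1, 3 => -Complex.I
  | 2, 0 => 1 | 2, 1 => -Complex.I | 2, 2 => 1 | 2, 3 => Complex.I
  | 3, 0 => 1 | 3, 1 => Complex.I | 3, 2 => -Complex.I | 3, 3 => 1

theorem pauli1_mul (a b : Fin 4) : pauli1 a * pauli1 b = pauli1Phase a b • pauli1 (a ^^^ b) := by
  fin_cases a <;> fin_cases b <;>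
    simp [pauli1, pauli1Phase, Matrix.one_fin_two, Matrix.smul_of, Matrix.smul_cons]

theorem pauli1_mul_self (a : Fin 4) : pauli1 a * pauli1 a = 1 := by
  fin_cases a <;> simp [pauli1, Matrix.one_fin_two]

theorem pauli1_commute_or_anticommute (a b : Fin 4) :
    pauli1 a * pauli1 b = pauli1 b * pauli1 a ∨ pauli1 a * pauli1 b = -(pauli1 b * pauli1 a) := by
  fin_cases a <;> fin_cases b <;>
    simp [pauli1, Matrix.one_fin_two, Complex.ext_iff]

theorem conjTranspose_pauli1 (a : Fin 4) : (pauli1 a)ᴴ = pauli1 a := by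
  fin_cases a <;> ext i j <;> fin_cases i <;> fin_cases j <;>
    simp [pauli1, Matrix.conjTranspose_apply]

theorem trace_pauli1 {a : Fin 4} (ha : a ≠ 0) : (pauli1 a).trace = 0 := by
  fin_cases a <;> simp_all [pauli1, Matrix.trace_fin_two]

section Pauli

variable {n : ℕ}

theorem pauli_eq_piKron (f : Fin n → Fin 4) : pauli n f = Matrix.piKron fun i => pauli1 (f i) := rfl

theorem pauli_zero : pauli n (fun _ => 0) = 1 := Matrix.piKron_one

theorem pauli_mul_pauli (f g : Fin n → Fin 4) :
    pauli n f * pauli n g = (∏ i, pauli1Phase (f i) (g i)) • pauli n (fun i => f i ^^^ g i) := by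
  simp only [pauli_eq_piKron, Matrix.piKron_mul, pauli1_mul, Matrix.piKron_smul]

theorem pauli_mul_self (f : Fin n → Fin 4) : pauli n f * pauli n f = 1 := by
  simp only [pauli_eq_piKron, Matrix.piKron_mul, pauli1_mul_self, Matrix.piKron_one]

theorem conjTranspose_pauli (f : Fin n → Fin 4) : (pauli n f)ᴴ = pauli n f := by
  simp only [pauli_eq_piKron, Matrix.conjTranspose_piKron, conjTranspose_pauli1]

theorem trace_pauli {f : Fin n → Fin 4} (hf : f ≠ fun _ => 0) : (pauli n f).trace = 0 := by
  obtain ⟨i, hi⟩ := Function.ne_iff.mp hf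
  rw [pauli_eq_piKron, Matrix.trace_piKron]
  exact Finset.prod_eq_zero (Finset.mem_univ i) (trace_pauli1 hi)

theorem pauli_commute_or_anticommute (f g : Fin n → Fin 4) :
    pauli n f * pauli n g = pauli n g * pauli n f ∨
      pauli n f * pauli n g = -(pauli n g * pauli n f) := by
  have h1 (a b : Fin 4) : ∃ k : ℕ, pauli1 a * pauli1 b = (-1 : ℂ) ^ k • (pauli1 b * pauli1 a) := by
    rcases pauli1_commute_or_anticommute a b with h | h
    · exact ⟨0, by simpa using h⟩
    · exact ⟨1, by simpa using h⟩
  choose k hk using h1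
  have : pauli n f * pauli n g = (-1 : ℂ) ^ (∑ i, k (f i) (g i)) • (pauli n g * pauli n f) := by
    simp only [pauli_eq_piKron, Matrix.piKron_mul, ← Finset.prod_pow_eq_pow_sum,
      ← Matrix.piKron_smul, ← hk]
  rcases neg_one_pow_eq_or ℂ (∑ i, k (f i) (g i)) with h | h <;> simp [this, h]

end Pauli

section Involution

variable {R A : Type*} [CommRing R] [Ring A] [Algebra R A]

theorem smul_one_add_smul_mul_smul_one_add_smul {P : A} (hP : P * P = 1) (a b c d : R) :
    (a • 1 + b • P) * (c • 1 + d • P) = (a * c + b * d) • 1 + (a * d + b * c) • P := by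
  simp only [add_mul, mul_add, smul_mul_smul, one_mul, mul_one, hP]
  module

theorem mul_mul_self_eq_neg_one_of_anticommute {P Q : A} (hP : P * P = 1) (hQ : Q * Q = 1)
    (hPQ : P * Q = -(Q * P)) : Q * P * (Q * P) = -1 := by
  calc Q * P * (Q * P) = Q * (P * Q) * P := by simp only [mul_assoc]
    _ = -(Q * Q * (P * P)) := by rw [hPQ]; noncomm_ring
    _ = -1 := by rw [hP, hQ, mul_one]

end Involution

section Clifford

variable {n : ℕ} {C D : Matrix (Fin n → Fin 2) (Fin n → Fin 2) ℂ}

theorem IsClifford.conjTranspose_mul (hC : IsClifford n C) : Cᴴ * C = 1 :=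
  Matrix.mem_unitaryGroup_iff'.mp hC.1

theorem isClifford_one : IsClifford n 1 :=
  ⟨one_mem _, fun f => ⟨f, 1, Or.inl rfl, by simp⟩⟩

theorem IsClifford.mul (hC : IsClifford n C) (hD : IsClifford n D) : IsClifford n (C * D) := by
  refine ⟨mul_mem hC.1 hD.1, fun f => ?_⟩
  obtain ⟨g, ε, hε, hg⟩ := hD.2 f
  obtain ⟨h, ε', hε', hh⟩ := hC.2 g
  refine ⟨h, ε * ε', by rcases hε with rfl | rfl <;> rcases hε' with rfl | rfl <;> norm_num, ?_⟩
  calc C * D * pauli n f * (C * D)ᴴ = C * (D * pauli n f * Dᴴ) * Cᴴ := by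
        simp only [Matrix.conjTranspose_mul, Matrix.mul_assoc]
    _ = (ε * ε') • pauli n h := by
        rw [hg, Matrix.mul_smul, Matrix.smul_mul, hh, smul_smul]

theorem IsClifford.ne_zero_of_conj_pauli (hC : IsClifford n C) {f g : Fin n → Fin 4} {ε : ℂ}
    (hf : f ≠ fun _ => 0) (hε : ε ≠ 0) (h : C * pauli n f * Cᴴ = ε • pauli n g) :
    g ≠ fun _ => 0 := by
  rintro rfl
  have htrace := congrArg Matrix.trace h
  rw [Matrix.trace_mul_cycle, hC.conjTranspose_mul, Matrix.one_mul, trace_pauli hf, pauli_zero,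
    Matrix.trace_smul, Matrix.trace_one, smul_eq_mul] at htrace
  simp [hε] at htrace

end Clifford

def IsSignedPauli (n : ℕ) (A : Matrix (Fin n → Fin 2) (Fin n → Fin 2) ℂ) : Prop :=
  ∃ f, f ≠ (fun _ => 0) ∧ (A = pauli n f ∨ A = -pauli n f)

theorem IsClifford.isSignedPauli_conj {n : ℕ} {C A : Matrix (Fin n → Fin 2) (Fin n → Fin 2) ℂ}
    (hC : IsClifford n C) (hA : IsSignedPauli n A) : IsSignedPauli n (C * A * Cᴴ) := by
  obtain ⟨f, hf, hA⟩ := hA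
  obtain ⟨g, ε, hε, hg⟩ := hC.2 f
  have hε0 : ε ≠ 0 := by rcases hε with rfl | rfl <;> norm_num
  refine ⟨g, hC.ne_zero_of_conj_pauli hf hε0 hg, ?_⟩
  rcases hA with rfl | rfl <;> rcases hε with rfl | rfl <;> simp [hg]

theorem eq_one_or_neg_one_of_smul_pauli_mul_self {n : ℕ} {c : ℂ} {g : Fin n → Fin 4}
    (h : c • pauli n g * (c • pauli n g) = 1) : c = 1 ∨ c = -1 := by
  rw [smul_mul_smul, pauli_mul_self] at h
  have := congrFun (congrFun h (fun _ => 0)) (fun _ => 0)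
  simpa [mul_self_eq_one_iff] using this

section PhaseGate

variable {n : ℕ}

/-- `e^{-iπ/4} e^{iπP/4} = e^{-iπ/4} (1 + iP)/√2` for the Pauli operator `P = pauli n f`. -/
noncomputable def pauliPhaseGate (n : ℕ) (f : Fin n → Fin 4) :
    Matrix (Fin n → Fin 2) (Fin n → Fin 2) ℂ :=
  ((1 - Complex.I) / 2) • 1 + ((1 + Complex.I) / 2) • pauli n f

theorem conjTranspose_pauliPhaseGate (f : Fin n → Fin 4) :
    (pauliPhaseGate n f)ᴴ = ((1 + Complex.I) / 2) • 1 + ((1 - Complex.I) / 2) • pauli n f := by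
  have h1 : star ((1 - Complex.I) / 2) = (1 + Complex.I) / 2 := by simp
  have h2 : star ((1 + Complex.I) / 2) = (1 - Complex.I) / 2 := by simp [sub_eq_add_neg]
  rw [pauliPhaseGate, Matrix.conjTranspose_add, Matrix.conjTranspose_smul,
    Matrix.conjTranspose_smul, Matrix.conjTranspose_one, conjTranspose_pauli, h1, h2]

theorem pauliPhaseGate_mul_conjTranspose (f : Fin n → Fin 4) :
    pauliPhaseGate n f * (pauliPhaseGate n f)ᴴ = 1 := by
  rw [conjTranspose_pauliPhaseGate, pauliPhaseGate,
    smul_one_add_smul_mul_smul_one_add_smul (pauli_mul_self f)]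
  ring_nf
  norm_num

theorem pauliPhaseGate_conj_of_commute {f g : Fin n → Fin 4}
    (h : pauli n f * pauli n g = pauli n g * pauli n f) :
    pauliPhaseGate n f * pauli n g * (pauliPhaseGate n f)ᴴ = pauli n g := by
  have hD : pauliPhaseGate n f * pauli n g = pauli n g * pauliPhaseGate n f := by
    simp only [pauliPhaseGate, add_mul, mul_add, smul_mul_assoc, mul_smul_comm, one_mul, mul_one, h]
  rw [hD, Matrix.mul_assoc, pauliPhaseGate_mul_conjTranspose, Matrix.mul_one]

theorem pauliPhaseGate_conj_of_anticommute {f g : Fin n → Fin 4}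
    (h : pauli n f * pauli n g = -(pauli n g * pauli n f)) :
    pauliPhaseGate n f * pauli n g * (pauliPhaseGate n f)ᴴ =
      (-Complex.I) • (pauli n g * pauli n f) := by
  have hD : pauliPhaseGate n f * pauli n g =
      pauli n g * (((1 - Complex.I) / 2) • 1 + (-((1 + Complex.I) / 2)) • pauli n f) := by
    simp only [pauliPhaseGate, add_mul, mul_add, smul_mul_assoc, mul_smul_comm, one_mul, mul_one,
      h, neg_smul, smul_neg, mul_neg]
  rw [hD, Matrix.mul_assoc, conjTranspose_pauliPhaseGate,
    smul_one_add_smul_mul_smul_one_add_smul (pauli_mul_self f)]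
  ring_nf
  simp

theorem isClifford_pauliPhaseGate (f : Fin n → Fin 4) : IsClifford n (pauliPhaseGate n f) := by
  refine ⟨Matrix.mem_unitaryGroup_iff.mpr (pauliPhaseGate_mul_conjTranspose f), fun g => ?_⟩
  rcases pauli_commute_or_anticommute f g with h | h
  · exact ⟨g, 1, Or.inl rfl, by rw [pauliPhaseGate_conj_of_commute h, one_smul]⟩
  · obtain ⟨c, g', hc⟩ : ∃ c g', pauli n g * pauli n f = c • pauli n g' :=
      ⟨_, _, pauli_mul_pauli g f⟩
    refine ⟨g', -Complex.I * c, eq_one_or_neg_one_of_smul_pauli_mul_self (g := g') ?_, ?_⟩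
    · rw [← smul_smul, ← hc, smul_mul_smul, mul_mul_self_eq_neg_one_of_anticommute
        (pauli_mul_self f) (pauli_mul_self g) h]
      simp
    · rw [pauliPhaseGate_conj_of_anticommute h, hc, smul_smul]

end PhaseGate

section Rotation

variable {n : ℕ}

theorem mul_Rop_of_conjTranspose_mul {C : Matrix (Fin n → Fin 2) (Fin n → Fin 2) ℂ}
    (hC : Cᴴ * C = 1) (A : Matrix (Fin n → Fin 2) (Fin n → Fin 2) ℂ) :
    C * Rop n A = Rop n (C * A * Cᴴ) * C := by
  simp only [Rop, mul_add, add_mul, mul_smul_comm, smul_mul_assoc, mul_one, one_mul,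
    Matrix.mul_assoc, hC]

theorem mul_prod_Rop_of_conjTranspose_mul {C : Matrix (Fin n → Fin 2) (Fin n → Fin 2) ℂ}
    (hC : Cᴴ * C = 1) {m : ℕ} (A : Fin m → Matrix (Fin n → Fin 2) (Fin n → Fin 2) ℂ) :
    C * (List.ofFn fun i => Rop n (A i)).prod =
      (List.ofFn fun i => Rop n (C * A i * Cᴴ)).prod * C := by
  induction m with
  | zero => simp
  | succ m ih =>
    simp only [List.ofFn_succ, List.prod_cons]
    rw [← mul_assoc, mul_Rop_of_conjTranspose_mul hC, mul_assoc (Rop _ _), ih, ← mul_assoc]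

theorem exp_pi_div_four_mul_I_sq : Complex.exp (Complex.I * (Real.pi / 4)) ^ 2 = Complex.I := by
  rw [← Complex.exp_nat_mul]
  convert Complex.exp_pi_div_two_mul_I using 2
  push_cast
  ring

/-- `e^{iπ/4} • pauliPhaseGate n f = e^{iπP/4}`, so this is `R(-P) = R(P) e^{iπP/4}`. -/
theorem Rop_neg_pauli (f : Fin n → Fin 4) :
    Rop n (-pauli n f) =
      Complex.exp (Complex.I * (Real.pi / 4)) • (Rop n (pauli n f) * pauliPhaseGate n f) := by
  have hω := exp_pi_div_four_mul_I_sq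
  rw [Rop, Rop, pauliPhaseGate, smul_one_add_smul_mul_smul_one_add_smul (pauli_mul_self f),
    smul_add, smul_smul, smul_smul, ← neg_one_smul ℂ (pauli n f), smul_smul]
  congr 2
  · linear_combination (Complex.I / 2) * hω + (1 / 2 : ℂ) * Complex.I_mul_I
  · linear_combination (-Complex.I / 2) * hω + (-1 / 2 : ℂ) * Complex.I_mul_I

theorem IsSignedPauli.exists_Rop_eq {A : Matrix (Fin n → Fin 2) (Fin n → Fin 2) ℂ}
    (hA : IsSignedPauli n A) :
    ∃ (f : Fin n → Fin 4) (θ : ℝ) (D : Matrix (Fin n → Fin 2) (Fin n → Fin 2) ℂ),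
      f ≠ (fun _ => 0) ∧ IsClifford n D ∧
      Rop n A = Complex.exp (Complex.I * θ) • (Rop n (pauli n f) * D) := by
  obtain ⟨f, hf, rfl | rfl⟩ := hA
  · exact ⟨f, 0, 1, hf, isClifford_one, by simp⟩
  · exact ⟨f, Real.pi / 4, pauliPhaseGate n f, hf, isClifford_pauliPhaseGate f,
      by rw [Rop_neg_pauli]; push_cast; rfl⟩

end Rotation

theorem exists_prod_Rop_pauli_eq_prod_Rop_signedPauli {n : ℕ} :
    ∀ {m : ℕ} (A : Fin m → Matrix (Fin n → Fin 2) (Fin n → Fin 2) ℂ),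
    (∀ i, IsSignedPauli n (A i)) → ∀ {C : Matrix (Fin n → Fin 2) (Fin n → Fin 2) ℂ},
    IsClifford n C →
    ∃ (φ : ℝ) (P : Fin m → (Fin n → Fin 4)) (C' : Matrix (Fin n → Fin 2) (Fin n → Fin 2) ℂ),
      (∀ i, P i ≠ fun _ => 0) ∧ IsClifford n C' ∧
      (List.ofFn fun i => Rop n (A i)).prod * C =
        Complex.exp (Complex.I * φ) • ((List.ofFn fun i => Rop n (pauli n (P i))).prod * C')
  | 0, _, _, C, hC => ⟨0, Fin.elim0, C, fun i => i.elim0, hC, by simp⟩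
  | m + 1, A, hA, C, hC => by
    obtain ⟨f, θ, D, hf, hD, hRop⟩ := (hA 0).exists_Rop_eq
    obtain ⟨φ, P, C', hP, hC', heq⟩ :=
      exists_prod_Rop_pauli_eq_prod_Rop_signedPauli (fun i => D * A i.succ * Dᴴ)
        (fun i => hD.isSignedPauli_conj (hA i.succ)) (hD.mul hC)
    refine ⟨θ + φ, Fin.cons f P, C', Fin.cases hf hP, hC', ?_⟩
    calc (List.ofFn fun i => Rop n (A i)).prod * C
        = Complex.exp (Complex.I * θ) • (Rop n (pauli n f) *
            ((D * (List.ofFn fun i => Rop n (A i.succ)).prod) * C)) := by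
          simp only [List.ofFn_succ, List.prod_cons, hRop, smul_mul_assoc, mul_assoc]
      _ = Complex.exp (Complex.I * θ) • (Rop n (pauli n f) *
            ((List.ofFn fun i => Rop n (D * A i.succ * Dᴴ)).prod * (D * C))) := by
          rw [mul_prod_Rop_of_conjTranspose_mul hD.conjTranspose_mul, mul_assoc]
      _ = _ := by
          rw [heq, List.ofFn_succ, List.prod_cons, mul_smul_comm, smul_smul, ← Complex.exp_add,
            mul_assoc]
          push_cast
          simp [mul_add]

theorem signs_can_be_taken_positive (n m : ℕ)
    (U : Matrix (Fin n → Fin 2) (Fin n → Fin 2) ℂ)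
    (φ : ℝ) (P : Fin m → (Fin n → Fin 4)) (b : Fin m → Fin 2)
    (C₀ : Matrix (Fin n → Fin 2) (Fin n → Fin 2) ℂ)
    (hP : ∀ i, P i ≠ fun _ => 0) (hC₀ : IsClifford n C₀)
    (hU : U = Complex.exp (Complex.I * φ) •
      ((List.ofFn fun i : Fin m => Rop n (((-1 : ℂ) ^ (b i : ℕ)) • pauli n (P i))).prod * C₀)) :
    ∃ (φ' : ℝ) (P' : Fin m → (Fin n → Fin 4))
      (C₀' : Matrix (Fin n → Fin 2) (Fin n → Fin 2) ℂ),
      (∀ i, P' i ≠ fun _ => 0) ∧ IsClifford n C₀' ∧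
      U = Complex.exp (Complex.I * φ') •
        ((List.ofFn fun i : Fin m => Rop n (pauli n (P' i))).prod * C₀') := by
  have hsigned (i : Fin m) : IsSignedPauli n (((-1 : ℂ) ^ (b i : ℕ)) • pauli n (P i)) :=
    ⟨P i, hP i, by generalize b i = k; fin_cases k <;> simp⟩
  obtain ⟨φ', P', C₀', hP', hC₀', heq⟩ :=
    exists_prod_Rop_pauli_eq_prod_Rop_signedPauli _ hsigned hC₀
  refine ⟨φ + φ', P', C₀', hP', hC₀', ?_⟩
  rw [hU, heq, smul_smul, ← Complex.exp_add]
  push_cast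
  ring_nf
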